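/- arXiv:q-alg/9612029 — 3 statements merged into one kernel-verified Lean document; each statement's English description precedes it below -/
import Mathlib

section
/- Let V be a finite-dimensional complex vector space, ρ : M_n(ℂ) → End(V) a unital ℂ-algebra homomorphism and ρ' : M_m(ℂ) → End(V) a unital ℂ-algebra antihomomorphism such that ρ(a)ρ'(b) = ρ'(b)ρ(a) for all a ∈ M_n(ℂ), b ∈ M_m(ℂ). Then there exists a natural number r ≥ 0 and a ℂ-linear isomorphism φ : V ≅ ℂⁿ ⊗ ℂʳ ⊗ ℂᵐ such that φ ∘ ρ(a) = (a ⊗ 1 ⊗ 1) ∘ φ and φ ∘ ρ'(b) = (1 ⊗ 1 ⊗ bᵀ) ∘ φ for all a ∈ M_n(ℂ) and b ∈ M_m(ℂ), where bᵀ denotes matrix transposition (V = 0 corresponding to r = 0). -/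
/-!
Put `σ c := ρ' (op cᵀ)`: transposition turns the antihomomorphism `ρ'` into a homomorphism
`σ : M_m(ℂ) → End V` commuting with `ρ`, which is where `bᵀ` in the statement comes from.
The products `ρ(E_ij) σ(E_kl)` then multiply like matrix units of `M_n ⊗ M_m`, so for the corner
`W = ρ(E_00) σ(E_00) V` the coordinates `v ↦ (ρ(E_0i) σ(E_0j) v)_{i,j}` identify `V` with
`Fin n → Fin m → W`, inverted by `w ↦ ∑ ρ(E_i0) σ(E_j0) w_ij`. In these coordinates `ρ(a)` acts by
`a` on the first index and `σ(c)` by `c` on the second, which is the action of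
`a ⊗ 1 ⊗ 1` and `1 ⊗ 1 ⊗ c` on `ℂⁿ ⊗ W ⊗ ℂᵐ`; finally `W ≅ ℂʳ` with `r = dim W`.
-/

open MulOpposite TensorProduct

namespace Matrix

theorem single_one_mul_eq_sum {K l m n : Type*} [CommSemiring K] [Fintype m] [Fintype n]
    [DecidableEq l] [DecidableEq m] [DecidableEq n] (i : l) (j : m) (a : Matrix m n K) :
    single i j (1 : K) * a = ∑ k, a j k • single i k 1 := by
  ext p q
  simp [mul_apply, single_apply, Matrix.sum_apply, ite_and]

theorem single_one_mul_single_one {K l m n : Type*} [CommSemiring K] [Fintype m]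
    [DecidableEq l] [DecidableEq m] [DecidableEq n] (i : l) (j k : m) (p : n) :
    single i j (1 : K) * single k p (1 : K) = if j = k then single i p 1 else 0 := by
  split_ifs with h
  · subst h
    simp
  · exact single_mul_single_of_ne (h := h) ..

end Matrix

theorem Module.subsingleton_of_algHom {K A V : Type*} [CommSemiring K] [Semiring A] [Algebra K A]
    [Subsingleton A] [AddCommMonoid V] [Module K V] (f : A →ₐ[K] Module.End K V) :
    Subsingleton V := by
  have := f.toRingHom.codomain_trivial
  rcases subsingleton_or_nontrivial V with hV | hV
  · exact hV
  · exact absurd this (not_subsingleton _)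

section TensorPi

variable (K : Type*) [CommSemiring K] {ι κ M W : Type*} [Fintype ι] [DecidableEq ι]
  [Fintype κ] [DecidableEq κ] [AddCommMonoid M] [Module K M] [AddCommMonoid W] [Module K W]

noncomputable def tensorPiEquiv (e : M ≃ₗ[K] W) :
    (ι → K) ⊗[K] (M ⊗[K] (κ → K)) ≃ₗ[K] (ι → κ → W) :=
  TensorProduct.comm K _ _ ≪≫ₗ piScalarRight K K _ ι ≪≫ₗ
    LinearEquiv.piCongrRight fun _ => piScalarRight K K M κ ≪≫ₗ
      LinearEquiv.piCongrRight fun _ => e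

variable {K}

theorem tensorPiEquiv_tmul (e : M ≃ₗ[K] W) (x : ι → K) (u : M) (y : κ → K) :
    tensorPiEquiv K e (x ⊗ₜ (u ⊗ₜ y)) = fun i j => (x i * y j) • e u := by
  ext i j
  simp [tensorPiEquiv, mul_smul]

theorem tensorPiEquiv_map_toLin'_id (e : M ≃ₗ[K] W) (a : Matrix ι ι K)
    (t : (ι → K) ⊗[K] (M ⊗[K] (κ → K))) (i : ι) (j : κ) :
    tensorPiEquiv K e (map (Matrix.toLin' a) LinearMap.id t) i j =
      ∑ l, a i l • tensorPiEquiv K e t l j := by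
  induction t using TensorProduct.induction_on with
  | zero => simp
  | tmul x s =>
    induction s using TensorProduct.induction_on with
    | zero => simp
    | tmul u y =>
      simp [tensorPiEquiv_tmul, Matrix.mulVec, dotProduct, Finset.sum_mul, Finset.sum_smul,
        smul_smul, mul_assoc]
    | add s s' hs hs' => simp_all [tmul_add, Finset.sum_add_distrib]
  | add t t' ht ht' => simp_all [Finset.sum_add_distrib]

theorem tensorPiEquiv_map_id_map_id_toLin' (e : M ≃ₗ[K] W) (c : Matrix κ κ K)
    (t : (ι → K) ⊗[K] (M ⊗[K] (κ → K))) (i : ι) (j : κ) :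
    tensorPiEquiv K e (map LinearMap.id (map LinearMap.id (Matrix.toLin' c)) t) i j =
      ∑ l, c j l • tensorPiEquiv K e t i l := by
  induction t using TensorProduct.induction_on with
  | zero => simp
  | tmul x s =>
    induction s using TensorProduct.induction_on with
    | zero => simp
    | tmul u y =>
      simp [tensorPiEquiv_tmul, Matrix.mulVec, dotProduct, Finset.mul_sum, Finset.sum_smul,
        smul_smul, mul_left_comm]
    | add s s' hs hs' => simp_all [tmul_add, Finset.sum_add_distrib]
  | add t t' ht ht' => simp_all [Finset.sum_add_distrib]

end TensorPi

namespace MatrixBimodule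

open Matrix

variable {K ι κ V : Type*} [CommSemiring K] [Fintype ι] [DecidableEq ι] [Fintype κ] [DecidableEq κ]
  [AddCommMonoid V] [Module K V]
  (ρ : Matrix ι ι K →ₐ[K] Module.End K V) (σ : Matrix κ κ K →ₐ[K] Module.End K V)

theorem mul_mul_mul_eq_of_commute (hcomm : ∀ a b, Commute (ρ a) (σ b))
    (a a' : Matrix ι ι K) (b b' : Matrix κ κ K) :
    ρ a * σ b * (ρ a' * σ b') = ρ (a * a') * σ (b * b') := by
  rw [map_mul, map_mul, (hcomm a' b).symm.mul_mul_mul_comm]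

theorem single_mul_single_of_commute (hcomm : ∀ a b, Commute (ρ a) (σ b))
    (i j i' j' : ι) (k l k' l' : κ) :
    ρ (single i j 1) * σ (single k l 1) * (ρ (single i' j' 1) * σ (single k' l' 1)) =
      if j = i' ∧ l = k' then ρ (single i j' 1) * σ (single k l' 1) else 0 := by
  rw [mul_mul_mul_eq_of_commute ρ σ hcomm, single_one_mul_single_one, single_one_mul_single_one]
  by_cases hj : j = i' <;> by_cases hl : l = k' <;> simp [hj, hl]

theorem sum_single_mul_single :
    ∑ i, ∑ j, ρ (single i i 1) * σ (single j j 1) = 1 := by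
  rw [← Finset.sum_mul_sum, ← map_sum, ← map_sum, sum_single_one, sum_single_one, map_one, map_one,
    one_mul]

def corner (i₀ : ι) (j₀ : κ) : Submodule K V :=
  LinearMap.range (ρ (single i₀ i₀ 1) * σ (single j₀ j₀ 1))

variable {ρ σ} (hcomm : ∀ a b, Commute (ρ a) (σ b)) (i₀ : ι) (j₀ : κ)
include hcomm

theorem corner_mem (i : ι) (j : κ) (v : V) :
    (ρ (single i₀ i 1) * σ (single j₀ j 1)) v ∈ corner ρ σ i₀ j₀ :=
  ⟨(ρ (single i₀ i 1) * σ (single j₀ j 1)) v, by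
    simp [← Module.End.mul_apply, single_mul_single_of_commute ρ σ hcomm]⟩

theorem corner_proj_apply {w : V} (hw : w ∈ corner ρ σ i₀ j₀) :
    (ρ (single i₀ i₀ 1) * σ (single j₀ j₀ 1)) w = w := by
  obtain ⟨v, rfl⟩ := hw
  simp [← Module.End.mul_apply, single_mul_single_of_commute ρ σ hcomm]

noncomputable def cornerEquiv : V ≃ₗ[K] (ι → κ → corner ρ σ i₀ j₀) :=
  LinearEquiv.ofLinearMap
    (LinearMap.pi fun i => LinearMap.pi fun j =>
      (ρ (single i₀ i 1) * σ (single j₀ j 1)).codRestrict _ (corner_mem hcomm i₀ j₀ i j))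
    (∑ i, ∑ j, (ρ (single i i₀ 1) * σ (single j j₀ 1)) ∘ₗ (corner ρ σ i₀ j₀).subtype ∘ₗ
      LinearMap.proj j ∘ₗ LinearMap.proj i)
    (LinearMap.ext fun F => funext₂ fun i j => Subtype.ext <| by
      simp [← Module.End.mul_apply, single_mul_single_of_commute ρ σ hcomm, DFunLike.ite_apply,
        ite_and, corner_proj_apply hcomm i₀ j₀ (F i j).2])
    (LinearMap.ext fun v => by
      simp only [LinearMap.coe_comp, Function.comp_apply, LinearMap.coe_sum, Finset.sum_apply,
        LinearMap.pi_apply, LinearMap.coe_proj, Function.eval, LinearMap.codRestrict_apply,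
        Submodule.subtype_apply, ← Module.End.mul_apply, single_mul_single_of_commute ρ σ hcomm,
        and_self, if_true, LinearMap.id_apply]
      simpa only [LinearMap.sum_apply, Module.End.one_apply] using
        LinearMap.congr_fun (sum_single_mul_single ρ σ) v)

theorem cornerEquiv_apply_coe (v : V) (i : ι) (j : κ) :
    (cornerEquiv hcomm i₀ j₀ v i j : V) = (ρ (single i₀ i 1) * σ (single j₀ j 1)) v :=
  rfl

theorem cornerEquiv_algHom_left (a : Matrix ι ι K) (v : V) (i : ι) (j : κ) :
    cornerEquiv hcomm i₀ j₀ (ρ a v) i j = ∑ l, a i l • cornerEquiv hcomm i₀ j₀ v l j := by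
  apply Subtype.ext
  have expand : ρ (single i₀ i 1) * σ (single j₀ j 1) * ρ a =
      ∑ l, a i l • (ρ (single i₀ l 1) * σ (single j₀ j 1)) := by
    rw [← mul_one (ρ a), ← map_one σ, mul_mul_mul_eq_of_commute ρ σ hcomm, mul_one,
      single_one_mul_eq_sum, map_sum, Finset.sum_mul]
    simp_rw [map_smul, smul_mul_assoc]
  simp [cornerEquiv_apply_coe, ← Module.End.mul_apply, expand, LinearMap.sum_apply]

theorem cornerEquiv_algHom_right (c : Matrix κ κ K) (v : V) (i : ι) (j : κ) :
    cornerEquiv hcomm i₀ j₀ (σ c v) i j = ∑ l, c j l • cornerEquiv hcomm i₀ j₀ v i l := by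
  apply Subtype.ext
  have expand : ρ (single i₀ i 1) * σ (single j₀ j 1) * σ c =
      ∑ l, c j l • (ρ (single i₀ i 1) * σ (single j₀ l 1)) := by
    rw [← one_mul (σ c), ← map_one ρ, mul_mul_mul_eq_of_commute ρ σ hcomm, mul_one,
      single_one_mul_eq_sum, map_sum, Finset.mul_sum]
    simp_rw [map_smul, mul_smul_comm]
  simp [cornerEquiv_apply_coe, ← Module.End.mul_apply, expand, LinearMap.sum_apply]

end MatrixBimodule

open Matrix MatrixBimodule in
theorem exists_linearEquiv_tensor_of_commute {K ι κ V : Type*} [Field K] [Fintype ι]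
    [DecidableEq ι] [Fintype κ] [DecidableEq κ] [AddCommGroup V] [Module K V]
    [FiniteDimensional K V]
    (ρ : Matrix ι ι K →ₐ[K] Module.End K V) (σ : Matrix κ κ K →ₐ[K] Module.End K V)
    (hcomm : ∀ a b, Commute (ρ a) (σ b)) :
    ∃ (r : ℕ) (φ : V ≃ₗ[K] (ι → K) ⊗[K] ((Fin r → K) ⊗[K] (κ → K))),
      (∀ a, φ.toLinearMap ∘ₗ (ρ a : V →ₗ[K] V) =
        map (toLin' a) LinearMap.id ∘ₗ φ.toLinearMap) ∧
      (∀ c, φ.toLinearMap ∘ₗ (σ c : V →ₗ[K] V) =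
        map LinearMap.id (map LinearMap.id (toLin' c)) ∘ₗ φ.toLinearMap) := by
  by_cases h : Nonempty ι ∧ Nonempty κ
  · obtain ⟨⟨i₀⟩, ⟨j₀⟩⟩ := h
    let e := (Module.finBasis K (corner ρ σ i₀ j₀)).equivFun.symm
    let φ := (cornerEquiv hcomm i₀ j₀).trans (tensorPiEquiv K e).symm
    refine ⟨_, φ, fun a => ?_, fun c => ?_⟩ <;> ext1 v <;> apply (tensorPiEquiv K e).injective <;>
      ext i j
    · simp [φ, tensorPiEquiv_map_toLin'_id, cornerEquiv_algHom_left]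
    · simp [φ, tensorPiEquiv_map_id_map_id_toLin', cornerEquiv_algHom_right]
  · have : Subsingleton V := by
      rcases not_and_or.mp h with h | h <;> rw [not_nonempty_iff] at h
      exacts [Module.subsingleton_of_algHom ρ, Module.subsingleton_of_algHom σ]
    exact ⟨0, .ofSubsingleton _ _, fun _ => Subsingleton.elim _ _, fun _ => Subsingleton.elim _ _⟩

/-- A finite-dimensional complex vector space carrying commuting unital
actions of `M_n(ℂ)` (from the left) and of the opposite of `M_m(ℂ)` (from the right)
is isomorphic to `ℂⁿ ⊗ ℂʳ ⊗ ℂᵐ` for some `r ≥ 0`, with the left action becoming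
`a ⊗ 1 ⊗ 1` and the right action becoming `1 ⊗ 1 ⊗ bᵀ`. -/
theorem stmt_1 (n m : ℕ) (V : Type*) [AddCommGroup V] [Module ℂ V] [FiniteDimensional ℂ V]
    (ρ : Matrix (Fin n) (Fin n) ℂ →ₐ[ℂ] Module.End ℂ V)
    (ρ' : (Matrix (Fin m) (Fin m) ℂ)ᵐᵒᵖ →ₐ[ℂ] Module.End ℂ V)
    (hcomm : ∀ (a : Matrix (Fin n) (Fin n) ℂ) (b : Matrix (Fin m) (Fin m) ℂ),
      Commute (ρ a) (ρ' (op b))) :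
    ∃ (r : ℕ)
      (φ : V ≃ₗ[ℂ] (Fin n → ℂ) ⊗[ℂ] ((Fin r → ℂ) ⊗[ℂ] (Fin m → ℂ))),
      (∀ a : Matrix (Fin n) (Fin n) ℂ,
        φ.toLinearMap ∘ₗ (ρ a : V →ₗ[ℂ] V) =
          (TensorProduct.map (Matrix.toLin' a) LinearMap.id) ∘ₗ φ.toLinearMap) ∧
      (∀ b : Matrix (Fin m) (Fin m) ℂ,
        φ.toLinearMap ∘ₗ (ρ' (op b) : V →ₗ[ℂ] V) =
          (TensorProduct.map LinearMap.id
            (TensorProduct.map LinearMap.id (Matrix.toLin' b.transpose))) ∘ₗ φ.toLinearMap) := by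
  obtain ⟨r, φ, hρ, hσ⟩ := exists_linearEquiv_tensor_of_commute ρ
    (ρ'.comp (Matrix.transposeAlgEquiv (Fin m) ℂ ℂ).toAlgHom)
    fun a b => by simpa using hcomm a b.transpose
  exact ⟨r, φ, hρ, fun b => by simpa using hσ b.transpose⟩
end

section
/- Let A = M_{n_1}(ℂ) ⊕ ⋯ ⊕ M_{n_k}(ℂ), H a finite-dimensional complex Hilbert space, π : A → End(H) a unital algebra homomorphism, and T ∈ End(H) an operator such that π(P_i) T π(P_i) = 0 for every i. If ω ∈ End(H) is a finite sum ω = Σ_α π(b_α) T π(c_α) with b_α, c_α ∈ A, and ω commutes with π(a) for every a ∈ A, then ω = 0. In other words, the bimodule of one-forms generated by T has trivial center. -/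
/-- For `A = M_{n_1}(ℂ) ⊕ ⋯ ⊕ M_{n_k}(ℂ)` represented on a
finite-dimensional complex Hilbert space and `T` an operator with `π(P_i) T π(P_i) = 0`
for every `i`, every element `ω = Σ_α π(b_α) T π(c_α)` of the bimodule generated by `T`
which commutes with all of `π(A)` must vanish: the bimodule of one-forms has no center. -/
theorem stmt_8 (k : ℕ) (n : Fin k → ℕ)
    (H : Type*) [NormedAddCommGroup H] [InnerProductSpace ℂ H] [FiniteDimensional ℂ H]
    (π : (∀ i : Fin k, Matrix (Fin (n i)) (Fin (n i)) ℂ) →ₐ[ℂ] Module.End ℂ H)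
    (P : Fin k → ∀ i : Fin k, Matrix (Fin (n i)) (Fin (n i)) ℂ)
    (hP : ∀ i, P i = Pi.single i 1)
    (T : Module.End ℂ H)
    (hT : ∀ i, π (P i) * T * π (P i) = 0)
    (N : ℕ) (b c : Fin N → ∀ i : Fin k, Matrix (Fin (n i)) (Fin (n i)) ℂ)
    (ω : Module.End ℂ H)
    (hω : ω = ∑ α : Fin N, π (b α) * T * π (c α))
    (hcenter : ∀ a : ∀ i : Fin k, Matrix (Fin (n i)) (Fin (n i)) ℂ,
      ω * π a = π a * ω) :
    ω = 0 := by
  -- P i is central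
  have hPcomm : ∀ (i : Fin k) (a : ∀ i : Fin k, Matrix (Fin (n i)) (Fin (n i)) ℂ),
      P i * a = a * P i := by
    intro i a
    rw [hP]
    funext j
    rcases eq_or_ne j i with rfl | h
    · simp
    · simp [Pi.single_eq_of_ne h]
  have hPidem : ∀ i : Fin k, P i * P i = P i := by
    intro i
    rw [hP]
    funext j
    rcases eq_or_ne j i with rfl | h
    · simp
    · simp [Pi.single_eq_of_ne h]
  have hsum : (∑ i, P i) = 1 := by
    funext j
    simp [hP, Pi.single_apply, Finset.sum_apply]
  have key : ∀ i : Fin k, ω * π (P i) = 0 := by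
    intro i
    have h1 : π (P i) * ω * π (P i) = 0 := by
      rw [hω, Finset.mul_sum, Finset.sum_mul]
      apply Finset.sum_eq_zero
      intro α _
      have hb : π (P i) * π (b α) = π (b α) * π (P i) := by
        rw [← map_mul, hPcomm, map_mul]
      have hc : π (c α) * π (P i) = π (P i) * π (c α) := by
        rw [← map_mul, ← hPcomm, map_mul]
      calc π (P i) * (π (b α) * T * π (c α)) * π (P i)
          = (π (P i) * π (b α)) * T * (π (c α) * π (P i)) := by
            simp only [mul_assoc]
        _ = π (b α) * (π (P i) * T * π (P i)) * π (c α) := by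
            rw [hb, hc]; simp only [mul_assoc]
        _ = 0 := by rw [hT]; simp
    have h2 : π (P i) * ω = π (P i) * ω * π (P i) := by
      conv_lhs => rw [← hPidem i, map_mul, mul_assoc, ← hcenter, ← mul_assoc]
    rw [hcenter, h2, h1]
  calc ω = ω * π 1 := by simp
    _ = ∑ i, ω * π (P i) := by rw [← hsum, map_sum, Finset.mul_sum]
    _ = 0 := by simp [key]
end

section
/- Let R be a ring, let P_1, …, P_k ∈ R be idempotents with P_i P_j = 0 for i ≠ j and P_1 + ⋯ + P_k = 1, and let T ∈ R satisfy P_i T P_i = 0 for every i. Then −Σ_{i=1}^k [T, P_i][T, P_i] = T² + Σ_{i=1}^k P_i T² P_i, where [x, y] = xy − yx. -/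
/-- In a ring with a complete family of orthogonal idempotents
`P_1, …, P_k` and an element `T` with `P_i T P_i = 0` for all `i`, one has the identity
`−Σ_i [T, P_i][T, P_i] = T² + Σ_i P_i T² P_i`, the operator form of
`dξ = ξξ + Σ_i P_i ξξ P_i`. -/
theorem stmt_9 (R : Type*) [Ring R] (k : ℕ) (P : Fin k → R)
    (hidem : ∀ i, P i * P i = P i)
    (horth : ∀ i j, i ≠ j → P i * P j = 0)
    (hsum : ∑ i : Fin k, P i = 1)
    (T : R) (hT : ∀ i, P i * T * P i = 0) :
    -∑ i : Fin k, (T * P i - P i * T) * (T * P i - P i * T) =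
      T ^ 2 + ∑ i : Fin k, P i * T ^ 2 * P i := by
  have key : ∀ i, (T * P i - P i * T) * (T * P i - P i * T)
      = -(T * P i * T) - P i * T ^ 2 * P i := by
    intro i
    have h1 : T * P i * (T * P i) = 0 := by
      have : T * (P i * T * P i) = 0 := by rw [hT i, mul_zero]
      calc T * P i * (T * P i) = T * (P i * T * P i) := by noncomm_ring
        _ = 0 := this
    have h2 : P i * T * (P i * T) = 0 := by
      have : P i * T * P i * T = 0 := by rw [hT i, zero_mul]
      calc P i * T * (P i * T) = P i * T * P i * T := by noncomm_ring
        _ = 0 := this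
    have h3 : T * P i * (P i * T) = T * P i * T := by
      calc T * P i * (P i * T) = T * (P i * P i) * T := by noncomm_ring
        _ = T * P i * T := by rw [hidem i]
    have h4 : P i * T * (T * P i) = P i * T ^ 2 * P i := by noncomm_ring
    rw [sub_mul, mul_sub, mul_sub, h1, h2, h3, h4]
    abel
  have hTsum : ∑ i : Fin k, T * P i * T = T ^ 2 := by
    rw [← Finset.sum_mul, ← Finset.mul_sum, hsum, mul_one, sq]
  calc -∑ i : Fin k, (T * P i - P i * T) * (T * P i - P i * T)
      = -∑ i : Fin k, (-(T * P i * T) - P i * T ^ 2 * P i) := by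
        simp_rw [key]
    _ = ∑ i : Fin k, T * P i * T + ∑ i : Fin k, P i * T ^ 2 * P i := by
        rw [Finset.sum_sub_distrib, Finset.sum_neg_distrib]
        abel
    _ = T ^ 2 + ∑ i : Fin k, P i * T ^ 2 * P i := by rw [hTsum]
end
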